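/- arXiv:2106.09688 — 2 statements merged into one kernel-verified Lean document; each statement's English description precedes it below -/
import Mathlib

section
/- For any constant 0 < α < 1 the following holds for all sufficiently large n ∈ ℕ divisible by 3, where d := 2⌈(4/α)^4⌉. There exists an n-vertex graph G with minimum degree δ(G) ≥ n/2 − 2d², α*(G) ≤ αn, and such that G contains no perfect K_3-tiling (no K_3-factor). -/
open Finset

namespace RTT

variable {k n : ℕ}

/-- `S` spans a copy of the `k`-vertex graph `F` in `G`:
there is an injective graph homomorphism from `F` to `G` with image exactly `S`. -/
def SpansCopy (F : SimpleGraph (Fin k)) (G : SimpleGraph (Fin n))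
    (S : Finset (Fin n)) : Prop :=
  ∃ f : Fin k → Fin n, Function.Injective f ∧
    (∀ a b, F.Adj a b → G.Adj (f a) (f b)) ∧ Finset.image f Finset.univ = S

/-- `T` is an `F`-tiling in `G`: a collection of pairwise vertex-disjoint vertex sets,
each spanning a copy of `F`. -/
def IsTiling (F : SimpleGraph (Fin k)) (G : SimpleGraph (Fin n))
    (T : Finset (Finset (Fin n))) : Prop :=
  (∀ S ∈ T, SpansCopy F G S) ∧ ∀ S ∈ T, ∀ S' ∈ T, S ≠ S' → Disjoint S S'

/-- The induced subgraph of `G` on the vertex set `A` has a perfect `F`-tiling. -/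
def PerfTilingOn (F : SimpleGraph (Fin k)) (G : SimpleGraph (Fin n))
    (A : Finset (Fin n)) : Prop :=
  ∃ T : Finset (Finset (Fin n)), IsTiling F G T ∧ T.biUnion id = A

/-- The minimum degree of `G` is at least `x`. -/
def MinDegGE (G : SimpleGraph (Fin n)) (x : ℝ) : Prop :=
  ∀ v : Fin n, x ≤ ((G.neighborSet v).ncard : ℝ)

/-- The `r`-independence number of `G` is at most `x`: every vertex set whose induced
subgraph contains no copy of `K_r` has size at most `x`. -/
def IndepBound (G : SimpleGraph (Fin n)) (r : ℕ) (x : ℝ) : Prop :=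
  ∀ S : Finset (Fin n), (∀ T ⊆ S, ¬ G.IsNClique r T) → (S.card : ℝ) ≤ x

/-- `α*(G) ≤ x`: every bipartite hole of `G` has size at most `x`. -/
def HoleBound (G : SimpleGraph (Fin n)) (x : ℝ) : Prop :=
  ∀ (s : ℕ) (U₁ U₂ : Finset (Fin n)), Disjoint U₁ U₂ → U₁.card = s → U₂.card = s →
    (∀ u ∈ U₁, ∀ v ∈ U₂, ¬ G.Adj u v) → (s : ℝ) ≤ x

/-- `A` is a `ξ`-absorbing set with respect to `V'` (for the `k`-vertex graph `F`
in the `n`-vertex graph `G`). -/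
def IsAbsorbingSet (F : SimpleGraph (Fin k)) (G : SimpleGraph (Fin n)) (ξ : ℝ)
    (V' A : Finset (Fin n)) : Prop :=
  ∀ U : Finset (Fin n), U ⊆ V' \ A → (U.card : ℝ) ≤ ξ * n →
    k ∣ (A ∪ U).card → PerfTilingOn F G (A ∪ U)

/-- `A` is an `(F,t)`-absorber for the `k`-set `S`. -/
def IsAbsorber (F : SimpleGraph (Fin k)) (G : SimpleGraph (Fin n)) (t : ℕ)
    (S A : Finset (Fin n)) : Prop :=
  Disjoint A S ∧ A.card ≤ k ^ 2 * t ∧ PerfTilingOn F G A ∧ PerfTilingOn F G (A ∪ S)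

/-- `S` has a family of at least `x` pairwise vertex-disjoint `(F,t)`-absorbers in `G`. -/
def HasManyAbsorbers (F : SimpleGraph (Fin k)) (G : SimpleGraph (Fin n)) (t : ℕ)
    (S : Finset (Fin n)) (x : ℝ) : Prop :=
  ∃ 𝒜 : Finset (Finset (Fin n)), x ≤ (𝒜.card : ℝ) ∧
    (∀ A ∈ 𝒜, IsAbsorber F G t S A) ∧
    ∀ A ∈ 𝒜, ∀ A' ∈ 𝒜, A ≠ A' → Disjoint A A'

/-- `𝒮` is an `F`-fan at `v` in `U`: a collection of pairwise disjoint `(k-1)`-sets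
`S ⊆ U \ {v}` such that `{v} ∪ S` spans a copy of `F`; its size is `𝒮.card`. -/
def IsFan (F : SimpleGraph (Fin k)) (G : SimpleGraph (Fin n)) (v : Fin n)
    (U : Finset (Fin n)) (𝒮 : Finset (Finset (Fin n))) : Prop :=
  (∀ S ∈ 𝒮, S ⊆ U.erase v ∧ S.card = k - 1 ∧ SpansCopy F G (insert v S)) ∧
    ∀ S ∈ 𝒮, ∀ S' ∈ 𝒮, S ≠ S' → Disjoint S S'

/-- `u` and `v` are `(F, m, t)`-reachable in `G`. -/
def FReachable (F : SimpleGraph (Fin k)) (G : SimpleGraph (Fin n)) (m : ℝ) (t : ℕ)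
    (u v : Fin n) : Prop :=
  ∀ W : Finset (Fin n), (W.card : ℝ) ≤ m →
    ∃ S : Finset (Fin n), Disjoint S W ∧ u ∉ S ∧ v ∉ S ∧ S.card ≤ k * t - 1 ∧
      PerfTilingOn F G (insert u S) ∧ PerfTilingOn F G (insert v S)

/-- `U` is `(F, m, t)`-closed in `G`. -/
def FClosed (F : SimpleGraph (Fin k)) (G : SimpleGraph (Fin n)) (m : ℝ) (t : ℕ)
    (U : Finset (Fin n)) : Prop :=
  ∀ u ∈ U, ∀ v ∈ U, u ≠ v → FReachable F G m t u v

/-- `P` is a partition of the vertex set of an `n`-vertex graph into `C` parts. -/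
def IsPartition {C : ℕ} (P : Fin C → Finset (Fin n)) : Prop :=
  (∀ i j, i ≠ j → Disjoint (P i) (P j)) ∧ Finset.univ.biUnion P = Finset.univ

/-- The `k`-vector `v` is `(F, β)`-robust with respect to the partition `P`:
it has coordinate sum `k`, and avoiding any set `W` of at most `βn` vertices there is
a copy of `F` whose vertex set has index vector `v`. -/
def RobustVec (F : SimpleGraph (Fin k)) (G : SimpleGraph (Fin n)) {C : ℕ}
    (P : Fin C → Finset (Fin n)) (β : ℝ) (v : Fin C → ℕ) : Prop :=
  (∑ i, v i) = k ∧
    ∀ W : Finset (Fin n), (W.card : ℝ) ≤ β * n →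
      ∃ S : Finset (Fin n), Disjoint S W ∧ SpansCopy F G S ∧ ∀ i, (S ∩ P i).card = v i

end RTT

/-!
Split `Fin n` into a side `P` of size `a ≡ 1 (mod 3)`, `a ≈ n / 2`, and its complement. Let `B`
be the bipartite graph between the sides formed by `d` permutations of the vertices, so that `B`
has maximum degree at most `d`; by a union bound over pairs of `m`-sets, `m ≈ αn / 2`, the
permutations can be chosen so that any `m` vertices in `P` and `m` vertices outside `P` span an
edge of `B`. The graph `G` takes the edges of `B` across the sides, and inside a side joins two
vertices unless they have a common `B`-neighbour.

A triangle with vertices on both sides would contain two vertices of one side with a common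
`B`-neighbour, so every triangle lies inside a side and a triangle factor would tile `P`, which is
impossible as `3 ∤ |P|`. A vertex misses at most `d²` vertices of its own side, which gives the
degree bound. Each half of a bipartite hole of size `2m - 1` has `m` vertices on a common side;
if both halves use the same side this contradicts the degree count since `d² < m`, otherwise it
contradicts the choice of `B`.
-/

namespace NoTriangleFactor

lemma descFactorial_mul_pow_le_of_le {a b : ℕ} (hab : a ≤ b) (m : ℕ) :
    a.descFactorial m * b ^ m ≤ b.descFactorial m * a ^ m := by
  induction m with
  | zero => simp
  | succ m ih =>
    have key : (a - m) * b ≤ (b - m) * a := by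
      rcases le_or_gt m a with h | h
      · zify [h, h.trans hab]
        nlinarith
      · simp [Nat.sub_eq_zero_of_le h.le]
    calc a.descFactorial (m + 1) * b ^ (m + 1)
        = ((a - m) * b) * (a.descFactorial m * b ^ m) := by rw [Nat.descFactorial_succ]; ring
      _ ≤ ((b - m) * a) * (b.descFactorial m * a ^ m) := Nat.mul_le_mul key ih
      _ = b.descFactorial (m + 1) * a ^ (m + 1) := by rw [Nat.descFactorial_succ]; ring

lemma choose_sub_mul_pow_le (h m : ℕ) :
    (h - m).choose m * h ^ m ≤ h.choose m * (h - m) ^ m := by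
  have := descFactorial_mul_pow_le_of_le (Nat.sub_le h m) m
  rw [Nat.descFactorial_eq_factorial_mul_choose, Nat.descFactorial_eq_factorial_mul_choose,
    mul_assoc, mul_assoc] at this
  exact Nat.le_of_mul_le_mul_left this (Nat.factorial_pos m)

lemma cast_choose_sub_le_mul_exp {h m : ℕ} (hmh : m ≤ h) (hh : 0 < h) :
    ((h - m).choose m : ℝ) ≤ h.choose m * Real.exp (-(m / h)) ^ m := by
  have hh : (0 : ℝ) < h := by exact_mod_cast hh
  have hsub : (h : ℝ) - m ≤ h * Real.exp (-(m / h)) := by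
    have := Real.one_sub_le_exp_neg (m / h)
    rw [← div_le_iff₀' hh]
    field_simp at this ⊢
    linarith
  refine le_of_mul_le_mul_right ?_ (pow_pos hh m)
  calc ((h - m).choose m : ℝ) * h ^ m ≤ h.choose m * ((h : ℝ) - m) ^ m := by
        rw [← Nat.cast_sub hmh]; exact_mod_cast choose_sub_mul_pow_le h m
    _ ≤ h.choose m * (h * Real.exp (-(m / h))) ^ m := by
        gcongr
        exact sub_nonneg.2 (by exact_mod_cast hmh)
    _ = h.choose m * Real.exp (-(m / h)) ^ m * h ^ m := by ring

lemma cast_choose_sq_le_exp (h m : ℕ) : (h.choose m : ℝ) ^ 2 ≤ Real.exp (2 * h) := by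
  have h2 : (2 : ℝ) ≤ Real.exp 1 := by linarith [Real.add_one_le_exp 1]
  calc (h.choose m : ℝ) ^ 2 ≤ ((2 : ℝ) ^ h) ^ 2 := by
        gcongr; exact_mod_cast Nat.choose_le_two_pow h m
    _ ≤ (Real.exp 1 ^ h) ^ 2 := by gcongr
    _ = Real.exp (2 * h) := by rw [← Real.exp_nat_mul, ← Real.exp_nat_mul]; ring_nf

lemma choose_sq_mul_choose_sub_pow_lt {h m D : ℕ} (hm : 0 < m) (hmh : m ≤ h)
    (hD : 2 * h ^ 2 < m ^ 2 * D) :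
    h.choose m ^ 2 * (h - m).choose m ^ D < h.choose m ^ D := by
  have hh : 0 < h := hm.trans_le hmh
  have hexp : Real.exp (2 * h) * Real.exp (-(m / h)) ^ (m * D) < 1 := by
    rw [← Real.exp_nat_mul, ← Real.exp_add, Real.exp_lt_one_iff]
    have : (2 * h ^ 2 : ℝ) < m ^ 2 * D := by exact_mod_cast hD
    have : (0 : ℝ) < h := by exact_mod_cast hh
    field_simp
    push_cast
    nlinarith
  have : (h.choose m : ℝ) ^ 2 * ((h - m).choose m : ℝ) ^ D < (h.choose m : ℝ) ^ D := by
    calc (h.choose m : ℝ) ^ 2 * ((h - m).choose m : ℝ) ^ D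
        ≤ Real.exp (2 * h) * (h.choose m * Real.exp (-(m / h)) ^ m) ^ D := by
          gcongr
          exacts [cast_choose_sq_le_exp h m, cast_choose_sub_le_mul_exp hmh hh]
      _ = (h.choose m : ℝ) ^ D * (Real.exp (2 * h) * Real.exp (-(m / h)) ^ (m * D)) := by ring
      _ < (h.choose m : ℝ) ^ D := mul_lt_of_lt_one_right
          (pow_pos (by exact_mod_cast Nat.choose_pos hmh) D) hexp
  exact_mod_cast this

lemma exists_forall_exists_notMem_of_sum_card_pow_lt {ι Ω : Type*} [Fintype Ω] [DecidableEq Ω]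
    (I : Finset ι) (bad : ι → Finset Ω) (D : ℕ)
    (h : ∑ i ∈ I, #(bad i) ^ D < Fintype.card Ω ^ D) :
    ∃ ω : Fin D → Ω, ∀ i ∈ I, ∃ k, ω k ∉ bad i := by
  by_contra! hcon
  have hcover : (univ : Finset (Fin D → Ω)) ⊆ I.biUnion fun i => Fintype.piFinset fun _ => bad i :=
    fun ω _ => by
      obtain ⟨i, hi, hω⟩ := hcon ω
      exact mem_biUnion.2 ⟨i, hi, Fintype.mem_piFinset.2 hω⟩
  have := (card_le_card hcover).trans card_biUnion_le
  simp only [Finset.card_univ, Fintype.card_fun, Fintype.card_fin, Fintype.card_piFinset,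
    prod_const] at this
  omega

section Permutations

open Equiv Nat

variable {α : Type*} [DecidableEq α]

lemma exists_perm_image_eq {S S' : Finset α} (h : #S = #S') : ∃ τ : Perm α, S.image τ = S' := by
  obtain ⟨τ, hτ⟩ := (Set.powersetCard.isPretransitive (α := α) (n := #S')).exists_smul_eq
    (Set.powersetCard.ofCard h) (Set.powersetCard.ofCard rfl)
  refine ⟨τ, ?_⟩
  have := congrArg (fun s : Set.powersetCard α #S' => (s : Finset α)) hτ
  simpa [Finset.smul_finset_def, Perm.smul_def] using this

variable [Fintype α]

lemma card_filter_image_eq_of_card_eq (X : Finset α) {S S' : Finset α} (h : #S = #S') :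
    #{σ : Perm α | X.image σ = S} = #{σ : Perm α | X.image σ = S'} := by
  obtain ⟨τ, rfl⟩ := exists_perm_image_eq h
  refine card_nbij' (τ * ·) (τ⁻¹ * ·) ?_ ?_ (fun σ _ => by simp) (fun σ _ => by simp)
  · intro σ hσ
    simp only [coe_filter, mem_univ, true_and, Set.mem_ofPred_eq, Perm.coe_mul] at hσ ⊢
    rw [← image_image, hσ]
  · intro σ hσ
    simp only [coe_filter, mem_univ, true_and, Set.mem_ofPred_eq, Perm.coe_mul] at hσ ⊢
    rw [← image_image, hσ, image_image]
    simp

lemma card_filter_forall_mem (X Z : Finset α) :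
    #{σ : Perm α | ∀ x ∈ X, σ x ∈ Z} = (#Z).choose #X * #{σ : Perm α | X.image σ = X} := by
  have hsplit : ({σ : Perm α | ∀ x ∈ X, σ x ∈ Z} : Finset _) =
      (powersetCard #X Z).biUnion fun S => {σ : Perm α | X.image σ = S} := by
    ext σ
    simp only [mem_filter, mem_univ, true_and, mem_biUnion, mem_powersetCard]
    refine ⟨fun h => ⟨X.image σ, ⟨?_, card_image_of_injective _ σ.injective⟩, rfl⟩, ?_⟩
    · simpa [subset_iff] using h
    · rintro ⟨S, ⟨hSZ, -⟩, rfl⟩ x hx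
      exact hSZ (mem_image_of_mem _ hx)
  rw [hsplit, card_biUnion, sum_congr rfl fun S hS =>
    card_filter_image_eq_of_card_eq X (mem_powersetCard.1 hS).2, sum_const, card_powersetCard,
    smul_eq_mul]
  intro S _ S' _ hSS'
  simp only [Function.onFun, disjoint_left, mem_filter, mem_univ, true_and]
  rintro σ rfl rfl
  exact hSS' rfl

lemma card_filter_forall_notMem_mul_choose (X Y : Finset α) :
    #{σ : Perm α | ∀ x ∈ X, σ x ∉ Y} * (Fintype.card α).choose #X
      = (Fintype.card α - #Y).choose #X * (Fintype.card α)! := by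
  have hY := card_filter_forall_mem X Yᶜ
  have huniv := card_filter_forall_mem X univ
  simp only [mem_compl, mem_univ, implies_true, filter_true, card_compl] at hY huniv
  rw [Finset.card_univ, Finset.card_univ, Fintype.card_perm] at huniv
  rw [hY, huniv]
  ring

lemma exists_perms_hitting {m D : ℕ} (hm : 0 < m) (hmα : m ≤ Fintype.card α)
    (hD : 2 * Fintype.card α ^ 2 < m ^ 2 * D) :
    ∃ σs : Fin D → Perm α, ∀ X Y : Finset α, m ≤ #X → m ≤ #Y → ∃ k, ∃ x ∈ X, σs k x ∈ Y := by
  set h := Fintype.card α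
  set pairs := powersetCard m (univ : Finset α) ×ˢ powersetCard m (univ : Finset α)
  have hbad : ∀ XY ∈ pairs,
      #{σ : Perm α | ∀ x ∈ XY.1, σ x ∉ XY.2} * h.choose m = (h - m).choose m * h ! := by
    intro XY hXY
    simp only [pairs, mem_product, mem_powersetCard, subset_univ, true_and] at hXY
    simpa [hXY.1, hXY.2] using card_filter_forall_notMem_mul_choose XY.1 XY.2
  have hunion : ∑ XY ∈ pairs, #{σ : Perm α | ∀ x ∈ XY.1, σ x ∉ XY.2} ^ D
      < Fintype.card (Perm α) ^ D := by
    refine lt_of_mul_lt_mul_right (a := h.choose m ^ D) ?_ (Nat.zero_le _)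
    rw [sum_mul, Fintype.card_perm]
    calc ∑ XY ∈ pairs, #{σ : Perm α | ∀ x ∈ XY.1, σ x ∉ XY.2} ^ D * h.choose m ^ D
        = ∑ XY ∈ pairs, ((h - m).choose m * h !) ^ D :=
          sum_congr rfl fun XY hXY => by rw [← mul_pow, hbad XY hXY]
      _ = h.choose m ^ 2 * (h - m).choose m ^ D * h ! ^ D := by
          rw [sum_const, card_product, card_powersetCard, Finset.card_univ, smul_eq_mul]; ring
      _ < h.choose m ^ D * h ! ^ D :=
          Nat.mul_lt_mul_of_pos_right (choose_sq_mul_choose_sub_pow_lt hm hmα hD)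
            (pow_pos (Nat.factorial_pos h) D)
      _ = h ! ^ D * h.choose m ^ D := mul_comm _ _
  obtain ⟨σs, hσs⟩ := exists_forall_exists_notMem_of_sum_card_pow_lt pairs _ D hunion
  refine ⟨σs, fun X Y hX hY => ?_⟩
  obtain ⟨X', hX'X, hX'⟩ := exists_subset_card_eq hX
  obtain ⟨Y', hY'Y, hY'⟩ := exists_subset_card_eq hY
  obtain ⟨k, hk⟩ := hσs (X', Y') (by simp [pairs, hX', hY'])
  simp only [mem_filter, mem_univ, true_and, not_forall, not_not] at hk
  obtain ⟨x, hx, hxY⟩ := hk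
  exact ⟨k, x, hX'X hx, hY'Y hxY⟩

end Permutations


open SimpleGraph

section CutGraph

variable {V : Type*} (p : V → Prop) (B : SimpleGraph V)

def cutGraph : SimpleGraph V where
  Adj u v := u ≠ v ∧
    ((p u ↔ p v) ∧ (¬ ∃ w, B.Adj u w ∧ B.Adj w v) ∨ ¬ (p u ↔ p v) ∧ B.Adj u v)
  symm := ⟨by
    rintro u v ⟨huv, ⟨hside, hw⟩ | ⟨hside, hB⟩⟩
    · exact ⟨huv.symm, Or.inl ⟨hside.symm, fun ⟨w, h₁, h₂⟩ => hw ⟨w, h₂.symm, h₁.symm⟩⟩⟩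
    · exact ⟨huv.symm, Or.inr ⟨fun h => hside h.symm, hB.symm⟩⟩⟩
  loopless := ⟨fun _ h => h.1 rfl⟩

def CrossHits (m : ℕ) : Prop :=
  ∀ X Y : Finset V, (∀ x ∈ X, p x) → (∀ y ∈ Y, ¬ p y) → m ≤ #X → m ≤ #Y →
    ∃ x ∈ X, ∃ y ∈ Y, B.Adj x y

variable {p B}

lemma cutGraph_adj_of_iff {u v : V} (h : p u ↔ p v) :
    (cutGraph p B).Adj u v ↔ u ≠ v ∧ ¬ ∃ w, B.Adj u w ∧ B.Adj w v := by
  simp only [cutGraph, h, true_and, not_true_eq_false, false_and, or_false]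

lemma cutGraph_adj_of_not_iff {u v : V} (h : ¬ (p u ↔ p v)) :
    (cutGraph p B).Adj u v ↔ B.Adj u v := by
  simp only [cutGraph, h, false_and, not_false_eq_true, true_and, false_or,
    and_iff_right_iff_imp]
  exact B.ne_of_adj

lemma cutGraph_iff_of_triangle {x y z : V} (hxy : (cutGraph p B).Adj x y)
    (hyz : (cutGraph p B).Adj y z) (hxz : (cutGraph p B).Adj x z) : p x ↔ p y := by
  by_contra hne
  by_cases hzx : p z ↔ p x
  · have hzy : ¬ (p z ↔ p y) := fun h => hne (hzx.symm.trans h)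
    exact ((cutGraph_adj_of_iff hzx.symm).1 hxz).2
      ⟨y, (cutGraph_adj_of_not_iff hne).1 hxy, ((cutGraph_adj_of_not_iff hzy).1 hyz.symm).symm⟩
  · have hzy : p y ↔ p z := by tauto
    exact ((cutGraph_adj_of_iff hzy).1 hyz).2
      ⟨x, ((cutGraph_adj_of_not_iff hne).1 hxy).symm,
        (cutGraph_adj_of_not_iff fun h => hzx h.symm).1 hxz⟩

lemma CrossHits.exists_adj_cutGraph {m : ℕ} (hBm : CrossHits p B m) {X Y : Finset V}
    (hX : ∀ x ∈ X, p x) (hY : ∀ y ∈ Y, ¬ p y) (hXm : m ≤ #X) (hYm : m ≤ #Y) :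
    ∃ x ∈ X, ∃ y ∈ Y, (cutGraph p B).Adj x y := by
  obtain ⟨x, hx, y, hy, hxy⟩ := hBm X Y hX hY hXm hYm
  exact ⟨x, hx, y, hy, (cutGraph_adj_of_not_iff fun h => hY y hy (h.1 (hX x hx))).2 hxy⟩

lemma exists_monochromatic_subset [DecidablePred p] {U : Finset V} {m : ℕ} (h : 2 * m ≤ #U + 1) :
    ∃ X ⊆ U, (∀ x ∈ X, ∀ x' ∈ X, p x ↔ p x') ∧ m ≤ #X := by
  have := card_filter_add_card_filter_not (s := U) (p := fun x => p x)
  by_cases hm : m ≤ #{x ∈ U | p x}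
  · refine ⟨_, filter_subset _ _, fun x hx x' hx' => ?_, hm⟩
    simp only [mem_filter] at hx hx'
    tauto
  · refine ⟨{x ∈ U | ¬ p x}, filter_subset _ _, fun x hx x' hx' => ?_, by omega⟩
    simp only [mem_filter] at hx hx'
    tauto

variable [Fintype V] [DecidableEq V] [DecidableRel B.Adj]

lemma card_biUnion_neighborFinset_le {D : ℕ} (hB : ∀ v, B.degree v ≤ D) (v : V) :
    #((B.neighborFinset v).biUnion fun w => B.neighborFinset w) ≤ D * D :=
  (card_biUnion_le_card_mul _ _ D fun w _ => hB w).trans (Nat.mul_le_mul_right _ (hB v))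

lemma mem_biUnion_neighborFinset_of_not_adj {v w : V} (hvw : p v ↔ p w) (hne : v ≠ w)
    (h : ¬ (cutGraph p B).Adj v w) :
    w ∈ (B.neighborFinset v).biUnion fun w => B.neighborFinset w := by
  rw [cutGraph_adj_of_iff hvw, not_and, not_not] at h
  obtain ⟨x, hvx, hxw⟩ := h hne
  exact mem_biUnion.2 ⟨x, (mem_neighborFinset _ _ _).2 hvx, (mem_neighborFinset _ _ _).2 hxw⟩

variable [DecidablePred p]

lemma card_filter_iff_le_ncard_neighborSet_cutGraph {D : ℕ} (hB : ∀ v, B.degree v ≤ D)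
    (v : V) : #{w | p w ↔ p v} ≤ ((cutGraph p B).neighborSet v).ncard + 1 + D * D := by
  classical
  have hsub : ({w | p w ↔ p v} : Finset V) ⊆ insert v ((cutGraph p B).neighborFinset v ∪
      (B.neighborFinset v).biUnion fun w => B.neighborFinset w) := by
    intro w hw
    rw [mem_filter] at hw
    by_cases hvw : v = w
    · exact hvw ▸ mem_insert_self _ _
    by_cases hadj : (cutGraph p B).Adj v w
    · exact mem_insert_of_mem (mem_union_left _ ((mem_neighborFinset _ _ _).2 hadj))
    · exact mem_insert_of_mem (mem_union_right _
        (mem_biUnion_neighborFinset_of_not_adj hw.2.symm hvw hadj))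
  have := card_biUnion_neighborFinset_le hB v
  have := (card_le_card hsub).trans <| (card_insert_le _ _).trans <|
    Nat.add_le_add_right (card_union_le _ _) 1
  rw [Set.ncard_eq_toFinset_card', ← neighborFinset_def]
  omega

lemma cutGraph_exists_adj_of_sides {D m : ℕ} (hB : ∀ v, B.degree v ≤ D)
    (hBm : CrossHits p B m) (hDm : D * D < m) {X Y : Finset V} (hXY : Disjoint X Y)
    (hX : ∀ x ∈ X, ∀ x' ∈ X, p x ↔ p x') (hY : ∀ y ∈ Y, ∀ y' ∈ Y, p y ↔ p y')
    (hXm : m ≤ #X) (hYm : m ≤ #Y) : ∃ x ∈ X, ∃ y ∈ Y, (cutGraph p B).Adj x y := by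
  obtain ⟨x₀, hx₀⟩ := card_pos.1 (by omega : 0 < #X)
  obtain ⟨y₀, hy₀⟩ := card_pos.1 (by omega : 0 < #Y)
  by_cases hside : p x₀ ↔ p y₀
  · by_contra! hno
    have hYsub : Y ⊆ (B.neighborFinset x₀).biUnion fun w => B.neighborFinset w := fun y hy =>
      mem_biUnion_neighborFinset_of_not_adj (hside.trans (hY y₀ hy₀ y hy))
        (fun h => disjoint_left.1 hXY hx₀ (h ▸ hy)) (hno x₀ hx₀ y hy)
    have := (card_le_card hYsub).trans (card_biUnion_neighborFinset_le hB x₀)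
    omega
  by_cases hpx : p x₀
  · exact hBm.exists_adj_cutGraph (fun x hx => (hX x₀ hx₀ x hx).1 hpx)
      (fun y hy hpy => hside ⟨fun _ => (hY y hy y₀ hy₀).1 hpy, fun _ => hpx⟩) hXm hYm
  · obtain ⟨y, hy, x, hx, hyx⟩ := hBm.exists_adj_cutGraph
      (fun y hy => (hY y₀ hy₀ y hy).1 (by tauto)) (fun x hx hpx' => hpx ((hX x hx x₀ hx₀).1 hpx'))
      hYm hXm
    exact ⟨x, hx, y, hy, hyx.symm⟩

lemma cutGraph_exists_adj_of_card {D m : ℕ} (hB : ∀ v, B.degree v ≤ D)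
    (hBm : CrossHits p B m) (hDm : D * D < m) {U₁ U₂ : Finset V} (hU : Disjoint U₁ U₂)
    (h₁ : 2 * m ≤ #U₁ + 1) (h₂ : 2 * m ≤ #U₂ + 1) :
    ∃ u ∈ U₁, ∃ v ∈ U₂, (cutGraph p B).Adj u v := by
  obtain ⟨X, hXU, hX, hXm⟩ := exists_monochromatic_subset (p := p) h₁
  obtain ⟨Y, hYU, hY, hYm⟩ := exists_monochromatic_subset (p := p) h₂
  obtain ⟨x, hx, y, hy, hxy⟩ :=
    cutGraph_exists_adj_of_sides hB hBm hDm (hU.mono hXU hYU) hX hY hXm hYm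
  exact ⟨x, hXU hx, y, hYU hy, hxy⟩

end CutGraph

lemma degree_le_of_adj_mem_range {V : Type*} [Fintype V] [DecidableEq V] {G : SimpleGraph V}
    [DecidableRel G.Adj] {D : ℕ} {v : V} (f : Fin D → V) (hf : ∀ w, G.Adj v w → w ∈ Set.range f) :
    G.degree v ≤ D := by
  rw [← card_neighborFinset_eq_degree]
  calc #(G.neighborFinset v) ≤ #(univ.image f) :=
        card_le_card fun w hw => by simpa using hf w ((mem_neighborFinset _ _ _).1 hw)
    _ ≤ D := card_image_le.trans (by simp)

section PermCrossGraph

variable {V : Type*} (p : V → Prop) {D : ℕ} (σs : Fin D → Equiv.Perm V)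

def permCrossGraph : SimpleGraph V :=
  SimpleGraph.fromRel fun u v => p u ∧ ¬ p v ∧ ∃ k, σs k u = v

instance [DecidablePred p] [DecidableEq V] : DecidableRel (permCrossGraph p σs).Adj :=
  fun u v => by unfold permCrossGraph; simp only [fromRel_adj]; infer_instance

lemma crossHits_permCrossGraph {m : ℕ}
    (hσs : ∀ X Y : Finset V, m ≤ #X → m ≤ #Y → ∃ k, ∃ x ∈ X, σs k x ∈ Y) :
    CrossHits p (permCrossGraph p σs) m := by
  intro X Y hX hY hXm hYm
  obtain ⟨k, x, hx, hxY⟩ := hσs X Y hXm hYm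
  refine ⟨x, hx, _, hxY, (fromRel_adj _ _ _).2 ⟨?_, Or.inl ⟨hX x hx, hY _ hxY, k, rfl⟩⟩⟩
  exact fun h => hY _ hxY (h ▸ hX x hx)

variable [Fintype V] [DecidableEq V] [DecidablePred p]

lemma degree_permCrossGraph_le (v : V) : (permCrossGraph p σs).degree v ≤ D := by
  by_cases hpv : p v
  · refine degree_le_of_adj_mem_range (fun k => σs k v) fun w hw => ?_
    simp only [permCrossGraph, fromRel_adj] at hw
    simpa [eq_comm] using (by tauto : ∃ k, σs k v = w)
  · refine degree_le_of_adj_mem_range (fun k => (σs k).symm v) fun w hw => ?_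
    simp only [permCrossGraph, fromRel_adj] at hw
    obtain ⟨k, rfl⟩ : ∃ k, σs k w = v := by tauto
    exact ⟨k, by simp⟩

end PermCrossGraph

end NoTriangleFactor

namespace RTT

variable {k n : ℕ} {F : SimpleGraph (Fin k)} {G : SimpleGraph (Fin n)}

lemma SpansCopy.card_eq {S : Finset (Fin n)} (h : SpansCopy F G S) : #S = k := by
  obtain ⟨f, hf, -, rfl⟩ := h
  rw [card_image_of_injective _ hf, Finset.card_univ, Fintype.card_fin]

lemma PerfTilingOn.dvd_card {A : Finset (Fin n)} (h : PerfTilingOn F G A) : k ∣ #A := by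
  obtain ⟨T, ⟨hcopy, hdisj⟩, rfl⟩ := h
  rw [card_biUnion (t := id) fun S hS S' hS' hne => hdisj S hS S' hS' hne,
    sum_congr rfl fun S hS => show #(id S) = k from (hcopy S hS).card_eq, sum_const, smul_eq_mul]
  exact dvd_mul_left k _

lemma PerfTilingOn.inter {A P : Finset (Fin n)}
    (hP : ∀ S, SpansCopy F G S → S ⊆ P ∨ Disjoint S P) (h : PerfTilingOn F G A) :
    PerfTilingOn F G (A ∩ P) := by
  obtain ⟨T, ⟨hcopy, hdisj⟩, rfl⟩ := h
  refine ⟨{S ∈ T | S ⊆ P}, ⟨fun S hS => hcopy S (mem_filter.1 hS).1,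
    fun S hS S' hS' => hdisj S (mem_filter.1 hS).1 S' (mem_filter.1 hS').1⟩, ?_⟩
  ext v
  simp only [mem_biUnion, mem_filter, id, mem_inter]
  constructor
  · rintro ⟨S, ⟨hS, hSP⟩, hv⟩
    exact ⟨⟨S, hS, hv⟩, hSP hv⟩
  · rintro ⟨⟨S, hS, hv⟩, hvP⟩
    exact ⟨S, ⟨hS, (hP S (hcopy S hS)).resolve_right fun hd => disjoint_left.1 hd hv hvP⟩, hv⟩

lemma not_perfTilingOn_univ {P : Finset (Fin n)}
    (hP : ∀ S, SpansCopy F G S → S ⊆ P ∨ Disjoint S P) (hk : ¬ k ∣ #P) :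
    ¬ PerfTilingOn F G univ :=
  fun h => hk (by simpa using (h.inter hP).dvd_card)

lemma SpansCopy.subset_or_disjoint_of_triangle {P : Finset (Fin n)}
    (hG : ∀ x y z, G.Adj x y → G.Adj y z → G.Adj x z → (x ∈ P ↔ y ∈ P)) {S : Finset (Fin n)}
    (hS : SpansCopy (⊤ : SimpleGraph (Fin 3)) G S) : S ⊆ P ∨ Disjoint S P := by
  obtain ⟨f, -, hadj, rfl⟩ := hS
  have e : ∀ a b : Fin 3, a ≠ b → G.Adj (f a) (f b) := fun a b hab => hadj a b hab
  have hside : ∀ i, f i ∈ P ↔ f 0 ∈ P := by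
    intro i
    fin_cases i
    · rfl
    · exact hG _ _ _ (e 1 0 (by decide)) (e 0 2 (by decide)) (e 1 2 (by decide))
    · exact hG _ _ _ (e 2 0 (by decide)) (e 0 1 (by decide)) (e 2 1 (by decide))
  by_cases h0 : f 0 ∈ P
  · left
    intro v hv
    obtain ⟨i, -, rfl⟩ := mem_image.1 hv
    exact (hside i).2 h0
  · right
    rw [disjoint_left]
    rintro v hv hvP
    obtain ⟨i, -, rfl⟩ := mem_image.1 hv
    exact h0 ((hside i).1 hvP)

end RTT

namespace NoTriangleFactor

lemma min_le_card_filter_val_lt_iff {n a : ℕ} (v : Fin n) :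
    min a (n - a) ≤ #{w : Fin n | (w : ℕ) < a ↔ (v : ℕ) < a} := by
  by_cases hv : (v : ℕ) < a
  · simp only [hv, iff_true, Fin.card_filter_val_lt]
    omega
  · have := card_filter_add_card_filter_not (s := (univ : Finset (Fin n)))
      (p := fun w : Fin n => (w : ℕ) < a)
    simp only [Fin.card_filter_val_lt, Finset.card_univ, Fintype.card_fin] at this
    simp only [hv, iff_false]
    omega

lemma two_mul_sq_lt_ceil_sq_mul {α : ℝ} (hα0 : 0 < α) (hα1 : α < 1) {n : ℕ} (hn : 0 < n) :
    2 * n ^ 2 < ⌈α * n / 2⌉₊ ^ 2 * (2 * ⌈(4 / α) ^ 4⌉₊) := by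
  have hn' : (0 : ℝ) < n := by exact_mod_cast hn
  have key : (α * n / 2) ^ 2 * (2 * (4 / α) ^ 4) = 128 * n ^ 2 / α ^ 2 := by
    field_simp
    ring
  have hlt : (2 * n ^ 2 : ℝ) < 128 * n ^ 2 / α ^ 2 := by
    rw [lt_div_iff₀ (by positivity)]
    have : α ^ 2 < 1 := by nlinarith
    nlinarith
  have : (2 * n ^ 2 : ℝ) < (⌈α * n / 2⌉₊ : ℝ) ^ 2 * (2 * ⌈(4 / α) ^ 4⌉₊) :=
    calc (2 * n ^ 2 : ℝ) < (α * n / 2) ^ 2 * (2 * (4 / α) ^ 4) := key ▸ hlt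
      _ ≤ (⌈α * n / 2⌉₊ : ℝ) ^ 2 * (2 * ⌈(4 / α) ^ 4⌉₊) := by
        gcongr <;> first | positivity | exact Nat.le_ceil _
  exact_mod_cast this

lemma exists_graph_of_params {n m d a : ℕ} (hm : 0 < m) (hmn : m ≤ n)
    (hd : 2 * n ^ 2 < m ^ 2 * d) (hdm : d * d < m) (han : a ≤ n) (ha : ¬ 3 ∣ a) :
    ∃ G : SimpleGraph (Fin n),
      (∀ v, min a (n - a) ≤ (G.neighborSet v).ncard + 1 + d * d) ∧
      (∀ U₁ U₂ : Finset (Fin n), Disjoint U₁ U₂ → 2 * m ≤ #U₁ + 1 → 2 * m ≤ #U₂ + 1 →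
        ∃ u ∈ U₁, ∃ v ∈ U₂, G.Adj u v) ∧
      ¬ RTT.PerfTilingOn (⊤ : SimpleGraph (Fin 3)) G univ := by
  obtain ⟨σs, hσs⟩ := exists_perms_hitting (α := Fin n) (D := d) hm (by simpa) (by simpa)
  let p : Fin n → Prop := fun v => (v : ℕ) < a
  have hB := degree_permCrossGraph_le p σs
  refine ⟨cutGraph p (permCrossGraph p σs), fun v => ?_, fun U₁ U₂ hU h₁ h₂ =>
    cutGraph_exists_adj_of_card hB (crossHits_permCrossGraph p σs hσs) hdm hU h₁ h₂, ?_⟩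
  · exact (min_le_card_filter_val_lt_iff v).trans
      (card_filter_iff_le_ncard_neighborSet_cutGraph hB v)
  · refine RTT.not_perfTilingOn_univ (P := {v | p v}) (fun S hS =>
      hS.subset_or_disjoint_of_triangle fun x y z hxy hyz hxz => by
        simpa using cutGraph_iff_of_triangle hxy hyz hxz) ?_
    simpa [p, Fin.card_filter_val_lt, han] using ha

end NoTriangleFactor

open RTT in
/-- For any `0 < α < 1`, for all sufficiently large `n` divisible by `3`,
with `d = 2⌈(4/α)^4⌉`, there is an `n`-vertex graph `G` with `δ(G) ≥ n/2 - 2d²`,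
`α*(G) ≤ αn` and no perfect `K_3`-tiling. -/
theorem no_triangle_factor_bipartite_holes :
    ∀ α : ℝ, 0 < α → α < 1 →
    ∃ N : ℕ, ∀ n : ℕ, N ≤ n → 3 ∣ n →
      ∃ G : SimpleGraph (Fin n),
        MinDegGE G ((n : ℝ) / 2 - 2 * ((2 * ⌈(4 / α) ^ 4⌉₊ : ℕ) : ℝ) ^ 2) ∧
        HoleBound G (α * n) ∧
        ¬ PerfTilingOn (⊤ : SimpleGraph (Fin 3)) G Finset.univ := by
  intro α hα0 hα1
  set d := 2 * ⌈(4 / α) ^ 4⌉₊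
  refine ⟨⌈2 * (d : ℝ) ^ 2 / α⌉₊ + 1, fun n hn h3n => ?_⟩
  set m := ⌈α * n / 2⌉₊
  have hn0 : (0 : ℝ) < n := by exact_mod_cast (by omega : 0 < n)
  have hdm : d * d < m := by
    have : 2 * (d : ℝ) ^ 2 < α * n := (div_lt_iff₀' hα0).1 (Nat.lt_of_ceil_lt hn)
    exact_mod_cast (by nlinarith : (d * d : ℝ) < α * n / 2).trans_le (Nat.le_ceil _)
  -- `a = 3 (n / 6) + 1` is `1` mod `3` and within `1` of `n / 2`
  obtain ⟨G, hdeg, hhole, htiling⟩ := NoTriangleFactor.exists_graph_of_params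
    (d := d) (a := 3 * (n / 6) + 1) (Nat.ceil_pos.2 (by positivity)) (Nat.ceil_le.2 (by nlinarith))
    (NoTriangleFactor.two_mul_sq_lt_ceil_sq_mul hα0 hα1 (by omega)) hdm (by omega) (by omega)
  refine ⟨G, fun v => ?_, fun s U₁ U₂ hU h₁ h₂ hno => ?_, htiling⟩
  · have : n ≤ 2 * (G.neighborSet v).ncard + 4 + 2 * (d * d) := by have := hdeg v; omega
    have : (n : ℝ) ≤ 2 * (G.neighborSet v).ncard + 4 + 2 * (d * d) := by exact_mod_cast this
    have : (2 : ℝ) ≤ d := by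
      have := Nat.ceil_pos.2 (by positivity : 0 < (4 / α) ^ 4); exact_mod_cast (by omega : 2 ≤ d)
    nlinarith
  · by_contra! hs
    have : 2 * m ≤ s + 1 := by
      have := Nat.ceil_lt_add_one (by positivity : 0 ≤ α * n / 2)
      have : 2 * m < s + 2 := by exact_mod_cast (by linarith : (2 * m : ℝ) < s + 2)
      omega
    obtain ⟨u, hu, v, hv, huv⟩ := hhole U₁ U₂ hU (h₁ ▸ this) (h₂ ▸ this)
    exact hno u hu v hv huv
end

section
/- Let k ≥ 3 be an integer, F a k-vertex graph and r ∈ ℕ such that either (1) F = K_k and r ∈ {k−1, k}, or (2) F is a tree on k vertices or F = C_k, and r = 2. Then for any ρ > 0 there exists α > 0 such that the following holds for all n ∈ ℕ: if G is an n-vertex graph with α_r(G) ≤ αn, v ∈ V(G) and U ⊆ V(G) are such that v has at least ρn neighbours in U, then there is an F-fan at v in U of size at least (ρ/k)n. -/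
open Finset

/-!
Let `W` be the set of neighbours of `v` in `U`. Fans are built greedily, so it suffices that every
`W' ⊆ W` with more than `(k-1)⌊αn⌋` vertices contains a `(k-1)`-set `S` such that `{v} ∪ S` spans
`F`; with `α = ρ/k²` the vertices of `W` left over at the end are negligible.

For `F = K_k`, a set of more than `αn` vertices contains a copy of `K_r` with `r ≥ k - 1`, and
`k - 1` of its vertices together with `v` span `K_k`. For trees and cycles (`r = 2`), deleting a
vertex of degree less than `k - 1` together with its neighbours lowers the independence number, so
`W'` contains a nonempty set `W''` in which every vertex has at least `k - 1` neighbours. Trees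
(in breadth-first order) and cycles admit a vertex ordering `x₀, x₁, …` in which each vertex has at
most one earlier neighbour besides `x₀`; sending `x₀` to `v`, the other vertices can be embedded
into `W''` one at a time.
-/

namespace SimpleGraph

variable {V : Type*} {G : SimpleGraph V}

lemma IsTree.eq_of_adj_of_dist_le (hG : G.IsTree) (r : V) {u u' x : V} (hu : G.Adj u x)
    (hu' : G.Adj u' x) (hd : G.dist r u ≤ G.dist r x) (hd' : G.dist r u' ≤ G.dist r x) :
    u = u' := by
  classical
  obtain ⟨q, hq, -⟩ := hG.connected.exists_path_of_dist r x
  have hconcat : ∀ {u} (hu : G.Adj u x), G.dist r u ≤ G.dist r x →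
      ∃ p : G.Walk r u, q = p.concat hu := by
    intro u hu hd
    obtain ⟨p, hp, hpl⟩ := hG.connected.exists_path_of_dist r u
    have hx : x ∉ p.support := fun hx => by
      have := G.dist_le (p.takeUntil x hx)
      have := p.length_takeUntil_lt_length hx hu.ne'
      omega
    exact ⟨p, hG.isAcyclic.path_concat hp hq hu
      (hG.isAcyclic.mem_support_of_ne_mem_support_of_adj_of_isPath hq hp hu.symm hx)⟩
  obtain ⟨p, hp⟩ := hconcat hu hd
  obtain ⟨p', hp'⟩ := hconcat hu' hd'
  exact (Walk.concat_inj (hp.symm.trans hp')).1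

variable [DecidableRel G.Adj]

theorem exists_subset_forall_le_degree (d m : ℕ) (W : Finset V)
    (hW : ∀ T ⊆ W, G.IsIndepSet (T : Set V) → T.card ≤ m) :
    ∃ W' ⊆ W, W.card ≤ W'.card + m * d ∧ ∀ w ∈ W', d ≤ (W'.filter (G.Adj w)).card := by
  classical
  induction m generalizing W with
  | zero =>
    refine ⟨W, subset_rfl, by omega, fun w hw => ?_⟩
    have := hW {w} (by simpa using hw) (by simp)
    simp at this
  | succ m ih =>
    by_cases hall : ∀ w ∈ W, d ≤ (W.filter (G.Adj w)).card
    · exact ⟨W, subset_rfl, by omega, hall⟩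
    push Not at hall
    obtain ⟨w, hwW, hw⟩ := hall
    set W₂ := W \ insert w (W.filter (G.Adj w))
    have hind : ∀ T ⊆ W₂, G.IsIndepSet (T : Set V) → T.card ≤ m := by
      intro T hT hTind
      have hwT : w ∉ T := fun h => by simpa [W₂] using hT h
      have := hW (insert w T) (insert_subset hwW (hT.trans Finset.sdiff_subset)) (by
        rw [Finset.coe_insert, ← isClique_compl, isClique_insert, isClique_compl]
        refine ⟨hTind, fun y hy hne => (compl_adj G w y).2 ⟨hne, fun hadj => ?_⟩⟩
        have := hT hy
        simp only [W₂, Finset.mem_sdiff, Finset.mem_insert, Finset.mem_filter] at this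
        exact this.2 (Or.inr ⟨this.1, hadj⟩))
      rw [Finset.card_insert_of_notMem hwT] at this
      omega
    obtain ⟨W', hW'W₂, hcard, hdeg⟩ := ih W₂ hind
    refine ⟨W', hW'W₂.trans Finset.sdiff_subset, ?_, hdeg⟩
    have : W.card ≤ W₂.card + (insert w (W.filter (G.Adj w))).card :=
      Finset.card_le_card_sdiff_add_card
    have := Finset.card_insert_le w (W.filter (G.Adj w))
    rw [Nat.succ_mul]
    omega

end SimpleGraph

theorem Finset.exists_pairwiseDisjoint_of_forall_exists_subset {α : Type*} [DecidableEq α]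
    (P : Finset α → Prop) {s : ℕ} (hs : 0 < s) (m : ℕ) (W₀ : Finset α)
    (h : ∀ W ⊆ W₀, m * s < W.card → ∃ S ⊆ W, S.card = s ∧ P S) :
    ∃ 𝒮 : Finset (Finset α), (∀ S ∈ 𝒮, S ⊆ W₀ ∧ S.card = s ∧ P S) ∧
      (𝒮 : Set (Finset α)).PairwiseDisjoint id ∧ W₀.card ≤ (𝒮.card + m) * s := by
  induction W₀ using Finset.strongInduction with
  | H W₀ ih =>
  by_cases hsmall : W₀.card ≤ m * s
  · exact ⟨∅, by simp, by simp, by simpa⟩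
  obtain ⟨S, hSW, hS, hPS⟩ := h W₀ subset_rfl (by omega)
  have hSne : S.Nonempty := Finset.card_pos.1 (by omega)
  obtain ⟨𝒮, h𝒮, hdisj, hcard⟩ := ih _ (Finset.sdiff_ssubset hSW hSne)
    fun W hW => h W (hW.trans Finset.sdiff_subset)
  have hS𝒮 : ∀ S' ∈ 𝒮, Disjoint S S' := fun S' hS' =>
    Finset.disjoint_of_subset_right (h𝒮 S' hS').1 Finset.disjoint_sdiff
  have hS_notMem : S ∉ 𝒮 := fun hS' => hSne.ne_empty (disjoint_self.1 (hS𝒮 S hS'))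
  refine ⟨insert S 𝒮, ?_, ?_, ?_⟩
  · simp only [Finset.mem_insert, forall_eq_or_imp]
    exact ⟨⟨hSW, hS, hPS⟩,
      fun S' hS' => ⟨(h𝒮 S' hS').1.trans Finset.sdiff_subset, (h𝒮 S' hS').2⟩⟩
  · rw [Finset.coe_insert]
    exact hdisj.insert fun S' hS' _ => hS𝒮 S' hS'
  · have := Finset.card_sdiff_add_card_eq_card hSW
    rw [Finset.card_insert_of_notMem hS_notMem]
    nlinarith

namespace RTT

variable {k : ℕ}

def IsParentOrdered (F : SimpleGraph (Fin (k + 1))) : Prop :=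
  ∀ j : Fin (k + 1), {i | i ≠ 0 ∧ i < j ∧ F.Adj i j}.Subsingleton

lemma IsParentOrdered.comap_castSucc {F : SimpleGraph (Fin (k + 2))} (hF : IsParentOrdered F) :
    IsParentOrdered (F.comap Fin.castSucc) := by
  intro j i ⟨hi0, hij, hi⟩ i' ⟨hi0', hij', hi'⟩
  exact Fin.castSucc_injective _ <| hF j.castSucc
    ⟨Fin.castSucc_ne_zero_iff.2 hi0, Fin.castSucc_lt_castSucc_iff.2 hij, hi⟩
    ⟨Fin.castSucc_ne_zero_iff.2 hi0', Fin.castSucc_lt_castSucc_iff.2 hij', hi'⟩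

lemma _root_.SimpleGraph.IsTree.exists_isParentOrdered_comap {F : SimpleGraph (Fin (k + 1))}
    (hF : F.IsTree) : ∃ e : Fin (k + 1) ≃ Fin (k + 1), IsParentOrdered (F.comap e) := by
  let depth : Fin (k + 1) → ℕ := F.dist 0
  refine ⟨Tuple.sort depth, fun j i ⟨_, hij, hi⟩ i' ⟨_, hij', hi'⟩ => ?_⟩
  have hmono := Tuple.monotone_sort depth
  exact (Tuple.sort depth).injective <|
    hF.eq_of_adj_of_dist_le 0 hi hi' (hmono hij.le) (hmono hij'.le)

lemma isParentOrdered_cycleGraph : IsParentOrdered (SimpleGraph.cycleGraph (k + 1)) := by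
  have hprev : ∀ i j : Fin (k + 1), i ≠ 0 → i < j → (SimpleGraph.cycleGraph (k + 1)).Adj i j →
      i.val + 1 = j.val := by
    intro i j hi0 hij hadj
    rw [SimpleGraph.cycleGraph_adj'] at hadj
    have hi0' : i.val ≠ 0 := Fin.val_ne_zero_iff.2 hi0
    rw [Fin.lt_def] at hij
    rcases hadj with h | h
    · rw [Fin.val_sub, Nat.mod_eq_of_lt (by omega)] at h
      omega
    · rw [Fin.sub_val_of_le hij.le] at h
      omega
  intro j i ⟨hi0, hij, hi⟩ i' ⟨hi0', hij', hi'⟩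
  have := hprev i j hi0 hij hi
  have := hprev i' j hi0' hij' hi'
  exact Fin.ext (by omega)

section Embedding

variable {V : Type*} {G : SimpleGraph V} [DecidableRel G.Adj] {v : V}
  {W : Finset V} {d : ℕ}

lemma IsParentOrdered.le_card_filter_forall_adj {F : SimpleGraph (Fin (k + 2))}
    [DecidableRel F.Adj] (hF : IsParentOrdered F) (hW : d ≤ W.card)
    (hdeg : ∀ w ∈ W, d ≤ (W.filter (G.Adj w)).card) {f : Fin (k + 1) → V} (hfW : ∀ i ≠ 0, f i ∈ W) :
    d ≤ (W.filter fun y => ∀ i : Fin (k + 1), i ≠ 0 → F.Adj i.castSucc (Fin.last _) →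
      G.Adj (f i) y).card := by
  by_cases hp : ∃ p : Fin (k + 1), p ≠ 0 ∧ F.Adj p.castSucc (Fin.last _)
  · obtain ⟨p, hp0, hp⟩ := hp
    refine (hdeg _ (hfW p hp0)).trans (Finset.card_le_card fun y hy => ?_)
    have hy := Finset.mem_filter.1 hy
    refine Finset.mem_filter.2 ⟨hy.1, fun i hi0 hi => ?_⟩
    obtain rfl : i = p := Fin.castSucc_injective _ <| hF (Fin.last _)
      ⟨Fin.castSucc_ne_zero_iff.2 hi0, Fin.castSucc_lt_last i, hi⟩
      ⟨Fin.castSucc_ne_zero_iff.2 hp0, Fin.castSucc_lt_last p, hp⟩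
    exact hy.2
  · push Not at hp
    rw [Finset.filter_true_of_mem fun y _ => ?_]
    · exact hW
    · exact fun i hi0 hi => absurd hi (hp i hi0)

theorem IsParentOrdered.exists_injective_hom {F : SimpleGraph (Fin (k + 1))}
    (hF : IsParentOrdered F) (hkd : k ≤ d) (hv : ∀ w ∈ W, G.Adj v w) (hW : d ≤ W.card)
    (hdeg : ∀ w ∈ W, d ≤ (W.filter (G.Adj w)).card) :
    ∃ f : Fin (k + 1) → V, Function.Injective f ∧ f 0 = v ∧ (∀ i ≠ 0, f i ∈ W) ∧
      ∀ a b, F.Adj a b → G.Adj (f a) (f b) := by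
  classical
  induction k with
  | zero =>
    have : Subsingleton (Fin (0 + 1)) := inferInstanceAs (Subsingleton (Fin 1))
    exact ⟨fun _ => v, Function.injective_of_subsingleton _, rfl,
      fun i hi => absurd (Subsingleton.elim i 0) hi,
      fun a b hab => absurd (Subsingleton.elim a b) hab.ne⟩
  | succ k ih =>
    obtain ⟨f, hf_inj, hf0, hfW, hf_hom⟩ := ih hF.comap_castSucc (by omega)
    have hv_img : v ∈ Finset.univ.image f := hf0 ▸ Finset.mem_image_of_mem f (Finset.mem_univ 0)
    have himg : ((Finset.univ.image f).erase v).card = k := by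
      rw [Finset.card_erase_of_mem hv_img, Finset.card_image_of_injective _ hf_inj,
        Finset.card_univ, Fintype.card_fin, Nat.add_sub_cancel]
    obtain ⟨x, hxC, hx⟩ := Finset.exists_mem_notMem_of_card_lt_card <|
      (himg.trans_lt (Nat.lt_succ_self k)).trans_le
        (hkd.trans (hF.le_card_filter_forall_adj hW hdeg hfW))
    obtain ⟨hxW, hxC⟩ := Finset.mem_filter.1 hxC
    have hx_range : x ∉ Set.range f := by
      rintro ⟨i, rfl⟩
      exact hx <| Finset.mem_erase.2
        ⟨(hv _ hxW).ne', Finset.mem_image_of_mem f (Finset.mem_univ i)⟩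
    have hlast : ∀ a, F.Adj a.castSucc (Fin.last _) → G.Adj (f a) x := by
      intro a ha
      by_cases ha0 : a = 0
      · exact ha0 ▸ hf0 ▸ hv x hxW
      · exact hxC a ha0 ha
    refine ⟨Fin.snoc (α := fun _ => V) f x, Fin.snoc_injective_of_injective hf_inj hx_range,
      by rw [← Fin.castSucc_zero, Fin.snoc_castSucc, hf0], fun i hi => ?_, fun a b hab => ?_⟩
    · induction i using Fin.lastCases with
      | last => simpa using hxW
      | cast i => simpa using hfW i (by simpa using hi)
    · induction a using Fin.lastCases with
      | last =>
        induction b using Fin.lastCases with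
        | last => exact absurd hab (F.irrefl)
        | cast b => simpa using (hlast b hab.symm).symm
      | cast a =>
        induction b using Fin.lastCases with
        | last => simpa using hlast a hab
        | cast b => simpa using hf_hom a b hab

end Embedding

variable {n : ℕ} {G : SimpleGraph (Fin n)}

lemma SpansCopy.of_comap_equiv {F : SimpleGraph (Fin k)} {e : Fin k ≃ Fin k} {S : Finset (Fin n)}
    (h : SpansCopy (F.comap e) G S) : SpansCopy F G S := by
  obtain ⟨f, hf_inj, hf_hom, rfl⟩ := h
  refine ⟨f ∘ e.symm, hf_inj.comp e.symm.injective,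
    fun a b hab => hf_hom _ _ (by simpa using hab), ?_⟩
  rw [← Finset.image_image, Finset.image_univ_equiv]

lemma spansCopy_top_of_isNClique {S : Finset (Fin n)} (h : G.IsNClique k S) :
    SpansCopy (⊤ : SimpleGraph (Fin k)) G S := by
  refine ⟨S.orderEmbOfFin h.card_eq, (S.orderEmbOfFin h.card_eq).injective, fun a b hab => ?_, ?_⟩
  · exact h.isClique (S.orderEmbOfFin_mem h.card_eq a) (S.orderEmbOfFin_mem h.card_eq b)
      ((S.orderEmbOfFin h.card_eq).injective.ne hab)
  · rw [← Finset.coe_inj, Finset.coe_image, Finset.coe_univ, Set.image_univ,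
      Finset.range_orderEmbOfFin]

lemma IndepBound.exists_isNClique {r : ℕ} {x : ℝ} (h : IndepBound G r x) {W : Finset (Fin n)}
    (hW : ⌊x⌋₊ < W.card) : ∃ T ⊆ W, G.IsNClique r T := by
  by_contra! hfree
  exact (Nat.lt_of_floor_lt hW).not_ge (h W hfree)

lemma IndepBound.card_le_of_isIndepSet {x : ℝ} (h : IndepBound G 2 x) {T : Finset (Fin n)}
    (hT : G.IsIndepSet (T : Set (Fin n))) : T.card ≤ ⌊x⌋₊ := by
  by_contra! hlarge
  obtain ⟨E, hET, hE⟩ := h.exists_isNClique hlarge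
  obtain ⟨a, b, hab, rfl⟩ := Finset.card_eq_two.1 hE.card_eq
  exact hT (hET (by simp)) (hET (by simp)) hab (hE.isClique (by simp) (by simp) hab)

lemma IsParentOrdered.exists_spansCopy {F : SimpleGraph (Fin (k + 1))} (hF : IsParentOrdered F)
    [DecidableRel G.Adj] {v : Fin n} {W : Finset (Fin n)} (hv : ∀ w ∈ W, G.Adj v w)
    (hW : k ≤ W.card) (hdeg : ∀ w ∈ W, k ≤ (W.filter (G.Adj w)).card) :
    ∃ S ⊆ W, S.card = k ∧ SpansCopy F G (insert v S) := by
  obtain ⟨f, hf_inj, hf0, hfW, hf_hom⟩ := hF.exists_injective_hom le_rfl hv hW hdeg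
  refine ⟨(Finset.univ.erase 0).image f, fun w hw => ?_, ?_, f, hf_inj, hf_hom, ?_⟩
  · obtain ⟨i, hi, rfl⟩ := Finset.mem_image.1 hw
    exact hfW i (Finset.ne_of_mem_erase hi)
  · simp [Finset.card_image_of_injective _ hf_inj]
  · rw [← hf0, ← Finset.image_insert, Finset.insert_erase (Finset.mem_univ 0)]

lemma exists_spansCopy_top {r : ℕ} (hkr : k ≤ r) {v : Fin n} {W T : Finset (Fin n)}
    (hv : ∀ w ∈ W, G.Adj v w) (hTW : T ⊆ W) (hT : G.IsNClique r T) :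
    ∃ S ⊆ W, S.card = k ∧ SpansCopy (⊤ : SimpleGraph (Fin (k + 1))) G (insert v S) := by
  obtain ⟨S, hST, hS⟩ := Finset.exists_subset_card_eq (hkr.trans hT.card_eq.ge)
  have hSk : G.IsNClique k S := ⟨hT.isClique.subset (Finset.coe_subset.2 hST), hS⟩
  exact ⟨S, hST.trans hTW, hS,
    spansCopy_top_of_isNClique (hSk.insert fun w hw => hv w (hTW (hST hw)))⟩

lemma exists_spansCopy_of_isIndepSet {F : SimpleGraph (Fin (k + 1))}
    (hF : ∃ e : Fin (k + 1) ≃ Fin (k + 1), IsParentOrdered (F.comap e)) {v : Fin n} {m : ℕ}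
    {W : Finset (Fin n)} (hv : ∀ w ∈ W, G.Adj v w)
    (hind : ∀ T ⊆ W, G.IsIndepSet (T : Set (Fin n)) → T.card ≤ m) (hW : m * k < W.card) :
    ∃ S ⊆ W, S.card = k ∧ SpansCopy F G (insert v S) := by
  classical
  obtain ⟨e, he⟩ := hF
  obtain ⟨W', hW'W, hcard, hdeg⟩ := G.exists_subset_forall_le_degree k m W hind
  obtain ⟨w, hw⟩ : W'.Nonempty := Finset.card_pos.1 (by omega)
  obtain ⟨S, hSW', hS, hspan⟩ := he.exists_spansCopy (fun w hw => hv w (hW'W hw))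
    ((hdeg w hw).trans (Finset.card_le_card (Finset.filter_subset _ _))) hdeg
  exact ⟨S, hSW'.trans hW'W, hS, hspan.of_comap_equiv⟩

lemma exists_spansCopy_insert {F : SimpleGraph (Fin (k + 1))} {r : ℕ} (hk : 0 < k)
    (hF : (F = ⊤ ∧ (r = k ∨ r = k + 1)) ∨
      ((F.IsTree ∨ F = SimpleGraph.cycleGraph (k + 1)) ∧ r = 2))
    {x : ℝ} (hind : IndepBound G r x) {v : Fin n} {W : Finset (Fin n)}
    (hv : ∀ w ∈ W, G.Adj v w) (hW : ⌊x⌋₊ * k < W.card) :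
    ∃ S ⊆ W, S.card = k ∧ SpansCopy F G (insert v S) := by
  rcases hF with ⟨rfl, hr⟩ | ⟨hF, rfl⟩
  · obtain ⟨T, hTW, hT⟩ := hind.exists_isNClique ((Nat.le_mul_of_pos_right _ hk).trans_lt hW)
    exact exists_spansCopy_top (by omega) hv hTW hT
  · refine exists_spansCopy_of_isIndepSet ?_ hv (fun T _ hT => hind.card_le_of_isIndepSet hT) hW
    rcases hF with hF | rfl
    · exact hF.exists_isParentOrdered_comap
    · exact ⟨Equiv.refl _, isParentOrdered_cycleGraph⟩

lemma le_of_le_mul_add_floor (hk : 0 < k) {ρ N s : ℝ} (hρN : 0 ≤ ρ * N)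
    (h : ρ * N ≤ (s + ⌊ρ / (k + 1) ^ 2 * N⌋₊) * k) : ρ / (k + 1) * N ≤ s := by
  set K : ℝ := k + 1
  have hK : 0 < K := by positivity
  set t := ρ * N / K ^ 2
  have ht : 0 ≤ t := by positivity
  have hfloor : (⌊ρ / K ^ 2 * N⌋₊ : ℝ) ≤ t := by
    rw [show ρ / K ^ 2 * N = t by ring]
    exact Nat.floor_le ht
  have ht_mul : ρ * N = t * K ^ 2 := (div_mul_cancel₀ _ (pow_ne_zero 2 hK.ne')).symm
  rw [show ρ / K * N = t * K by rw [div_mul_eq_mul_div, ht_mul]; field_simp]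
  have hk' : (0 : ℝ) < k := by exact_mod_cast hk
  have : (k : ℝ) * (t * K) ≤ k * s := by nlinarith
  exact le_of_mul_le_mul_left this hk'

end RTT

open RTT in
/-- Existence of large `F`-fans. -/
theorem large_fans :
    ∀ k r : ℕ, 3 ≤ k → ∀ F : SimpleGraph (Fin k),
    ((F = ⊤ ∧ (r = k - 1 ∨ r = k)) ∨
     ((F.IsTree ∨ F = SimpleGraph.cycleGraph k) ∧ r = 2)) →
    ∀ ρ : ℝ, 0 < ρ →
    ∃ α : ℝ, 0 < α ∧ ∀ n : ℕ, ∀ G : SimpleGraph (Fin n),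
      IndepBound G r (α * n) →
      ∀ (v : Fin n) (U : Finset (Fin n)),
        ρ * n ≤ ((((U : Set (Fin n)) ∩ G.neighborSet v).ncard : ℕ) : ℝ) →
        ∃ 𝒮 : Finset (Finset (Fin n)),
          IsFan F G v U 𝒮 ∧ (ρ / (k : ℝ)) * n ≤ (𝒮.card : ℝ) := by
  classical
  intro k r hk F hF ρ hρ
  obtain ⟨k, rfl⟩ : ∃ j, k = j + 1 := ⟨k - 1, by omega⟩
  simp only [Nat.add_sub_cancel] at hF ⊢
  refine ⟨ρ / (k + 1) ^ 2, by positivity, fun n G hind v U hU => ?_⟩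
  set W₀ := U.filter (G.Adj v)
  have hW₀ : ρ * n ≤ W₀.card := by
    rwa [show (U : Set (Fin n)) ∩ G.neighborSet v = W₀ by ext; simp [W₀],
      Set.ncard_coe_finset] at hU
  obtain ⟨𝒮, h𝒮, hdisj, hcard⟩ :=
    Finset.exists_pairwiseDisjoint_of_forall_exists_subset _ (by omega) _ W₀ fun W hW hlarge =>
      exists_spansCopy_insert (by omega) hF hind (fun w hw => (Finset.mem_filter.1 (hW hw)).2)
        hlarge
  refine ⟨𝒮, ⟨fun S hS => ⟨(h𝒮 S hS).1.trans fun w hw => ?_, (h𝒮 S hS).2⟩,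
    fun S hS S' hS' => hdisj hS hS'⟩, ?_⟩
  · obtain ⟨hwU, hvw⟩ := Finset.mem_filter.1 hw
    exact Finset.mem_erase.2 ⟨hvw.ne', hwU⟩
  · push_cast
    exact le_of_le_mul_add_floor (by omega) (by positivity) (hW₀.trans (by exact_mod_cast hcard))
end
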